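/- arXiv:1210.2700 — 3 statements merged into one kernel-verified Lean document; each statement's English description precedes it below -/
import Mathlib

section
/- Let α : k → k be a field endomorphism. Then there exists a field extension β : k → K and a field endomorphism α̂ : K → K such that α̂ ∘ β = β ∘ α and α̂ is an isomorphism (i.e., bijective). -/
/-!
The inversive closure of a ring endomorphism `f` is the direct limit of `R →f R →f R →f ⋯`.
Applying `f` levelwise induces an endomorphism of the limit, and moving an element from level
`i` to level `i + 1` inverts it, because `f x` at level `i + 1` is identified with `x` at
level `i`. A direct limit of fields is a field.
-/

namespace InversiveClosure

variable {R : Type*} [CommRing R] (f : R →+* R)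

def transition (i j : ℕ) (_ : i ≤ j) : R →+* R := f ^ (j - i)

instance directedSystem : DirectedSystem (fun _ : ℕ => R) (transition f · · ·) where
  map_self _ _ := by simp [transition]
  map_map {l j i} hij hjl x := by
    change (f ^ (l - j) * f ^ (j - i)) x = (f ^ (l - i)) x
    rw [← pow_add, Nat.sub_add_sub_cancel hjl hij]

end InversiveClosure

abbrev InversiveClosure {R : Type*} [CommRing R] (f : R →+* R) : Type _ :=
  Ring.DirectLimit (fun _ : ℕ => R) (InversiveClosure.transition f · · ·)

namespace InversiveClosure

variable {R : Type*} [CommRing R] (f : R →+* R)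

noncomputable def of (i : ℕ) : R →+* InversiveClosure f :=
  Ring.DirectLimit.of (fun _ : ℕ => R) (transition f · · ·) i

theorem of_transition {i j : ℕ} (hij : i ≤ j) (x : R) :
    of f j (transition f i j hij x) = of f i x :=
  Ring.DirectLimit.of_f (G := fun _ : ℕ => R) (f := (transition f · · ·)) hij x

theorem hom_ext {S : Type*} [CommRing S] {g₁ g₂ : InversiveClosure f →+* S}
    (h : ∀ i, g₁.comp (of f i) = g₂.comp (of f i)) : g₁ = g₂ :=
  Ring.DirectLimit.hom_ext _ h

theorem of_succ_apply (i : ℕ) (x : R) : of f (i + 1) (f x) = of f i x := by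
  simpa [transition] using of_transition f (Nat.le_succ i) x

theorem of_succ_comp (i : ℕ) : (of f (i + 1)).comp f = of f i :=
  RingHom.ext (of_succ_apply f i)

noncomputable def extend : InversiveClosure f →+* InversiveClosure f :=
  Ring.DirectLimit.lift _ _ _ (fun i => (of f i).comp f) fun i j hij x => by
    change of f j ((f * f ^ (j - i)) x) = of f i (f x)
    rw [← pow_succ', pow_succ]
    exact of_transition f hij (f x)

noncomputable def shift : InversiveClosure f →+* InversiveClosure f :=
  Ring.DirectLimit.lift _ _ _ (fun i => of f (i + 1)) fun i j hij x => by
    change of f (j + 1) ((f ^ (j - i)) x) = of f (i + 1) x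
    rw [← Nat.add_sub_add_right j 1 i]
    exact of_transition f (Nat.succ_le_succ hij) x

theorem extend_comp_of (i : ℕ) : (extend f).comp (of f i) = (of f i).comp f :=
  RingHom.ext fun x => by
    simp only [RingHom.comp_apply, extend, of, Ring.DirectLimit.lift_of]

theorem shift_comp_of (i : ℕ) : (shift f).comp (of f i) = of f (i + 1) :=
  RingHom.ext fun x => by
    simp only [RingHom.comp_apply, shift, of, Ring.DirectLimit.lift_of]

theorem extend_comp_shift : (extend f).comp (shift f) = RingHom.id _ :=
  hom_ext f fun i => by
    rw [RingHom.comp_assoc, shift_comp_of, extend_comp_of, of_succ_comp, RingHom.id_comp]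

theorem shift_comp_extend : (shift f).comp (extend f) = RingHom.id _ :=
  hom_ext f fun i => by
    rw [RingHom.comp_assoc, extend_comp_of, ← RingHom.comp_assoc, shift_comp_of, of_succ_comp,
      RingHom.id_comp]

theorem bijective_extend : Function.Bijective (extend f) :=
  Function.bijective_iff_has_inverse.2
    ⟨shift f, RingHom.congr_fun (shift_comp_extend f), RingHom.congr_fun (extend_comp_shift f)⟩

noncomputable instance instField {k : Type*} [Field k] (α : k →+* k) :
    Field (InversiveClosure α) :=
  Field.DirectLimit.field _ (transition α)

end InversiveClosure

open InversiveClosure in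
/-- For any field endomorphism `α : k → k` there exist a field extension
`β : k → K` and a field endomorphism `α̂ : K → K` with `α̂ ∘ β = β ∘ α` and `α̂` bijective. -/
theorem exists_extension_with_bijective_endomorphism
    {k : Type u} [Field k] (α : k →+* k) :
    ∃ (K : Type u) (_ : Field K) (β : k →+* K) (αhat : K →+* K),
      αhat.comp β = β.comp α ∧ Function.Bijective αhat :=
  ⟨InversiveClosure α, inferInstance, of α 0, extend α, extend_comp_of α 0, bijective_extend α⟩
end

section
/- Let φ : (R, m, k) → (R, m, k) be a contracting endomorphism such that R/φ(m)R is Artinian, let β̃ : R → (S, mS, K) be a local homomorphism with maximal ideal mS, and let ψ : S → S be a local endomorphism with ψ ∘ β̃ = β̃ ∘ φ, inducing an isomorphism on the residue field K, with S complete. Then ψ is module-finite, i.e., S is a finitely generated module over itself via restriction of scalars along ψ. -/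
/-!
Since `R ⧸ φ(m)R` is Artinian, `m ^ c ⊆ φ(m)R` for some `c`, and applying `β` together with
`ψ ∘ β = β ∘ φ` gives `(mS) ^ c ⊆ ψ(mS)S`. As `ψ` is surjective on residue fields, each
coefficient of a combination of generators of `(mS) ^ i` is a `ψ`-image up to an error in `mS`;
inductively `S = Nᵢ + (mS) ^ i` with `Nᵢ` finitely generated through `ψ`, so `S ⧸ ψ(mS)S` is
module-finite over `ψ`. Completeness of `S` then lifts generators of `S ⧸ ψ(mS)S` to generators
of `S` (complete Nakayama).
-/

open IsLocalRing Submodule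

theorem Submodule.mem_smul_top_pi_iff {R ι : Type*} [CommRing R] [Finite ι] {M : ι → Type*}
    [∀ i, AddCommGroup (M i)] [∀ i, Module R (M i)] (I : Ideal R) (x : ∀ i, M i) :
    x ∈ I • (⊤ : Submodule R (∀ i, M i)) ↔ ∀ i, x i ∈ I • (⊤ : Submodule R (M i)) := by
  refine ⟨fun hx i => smul_top_le_comap_smul_top I (LinearMap.proj i) hx, fun hx => ?_⟩
  classical
  cases nonempty_fintype ι
  rw [← Finset.univ_sum_single x]
  exact sum_mem fun i _ => smul_top_le_comap_smul_top I (LinearMap.single R M i) (hx i)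

instance IsPrecomplete.pi {R ι : Type*} [CommRing R] [Finite ι] {M : ι → Type*}
    [∀ i, AddCommGroup (M i)] [∀ i, Module R (M i)] (I : Ideal R)
    [∀ i, IsPrecomplete I (M i)] : IsPrecomplete I (∀ i, M i) := by
  refine ⟨fun f hf => ?_⟩
  have hlim (i : ι) : ∃ L, ∀ n, f n i ≡ L [SMOD (I ^ n • ⊤ : Submodule R (M i))] :=
    IsPrecomplete.prec inferInstance fun hmn => SModEq.sub_mem.2 <|
      (mem_smul_top_pi_iff _ _).1 (SModEq.sub_mem.1 (hf hmn)) i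
  choose L hL using hlim
  exact ⟨L, fun n => SModEq.sub_mem.2 <|
    (mem_smul_top_pi_iff _ _).2 fun i => SModEq.sub_mem.1 (hL i n)⟩

theorem Module.Finite.of_finite_quotient_smul_top {R M : Type*} [CommRing R] [AddCommGroup M]
    [Module R M] (I : Ideal R) [IsPrecomplete I R] [IsHausdorff I M]
    [Module.Finite R (M ⧸ I • (⊤ : Submodule R M))] : Module.Finite R M := by
  obtain ⟨n, f, hf⟩ := Module.Finite.exists_fin' R (M ⧸ I • (⊤ : Submodule R M))
  obtain ⟨g, rfl⟩ :=
    Module.projective_lifting_property (I • (⊤ : Submodule R M)).mkQ f (mkQ_surjective _)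
  exact .of_surjective g (surjective_of_mkQ_comp_surjective hf)

theorem Submodule.exists_fg_le_sup_smul {A B M : Type*} [CommRing A] [CommRing B] [Algebra A B]
    [AddCommGroup M] [Module A M] [Module B M] [IsScalarTower A B M] {P : Ideal B}
    (hP : Function.Surjective ((Ideal.Quotient.mk P).comp (algebraMap A B)))
    {Q : Submodule B M} (hQ : Q.FG) :
    ∃ N : Submodule A M, N.FG ∧ Q.restrictScalars A ≤ N ⊔ (P • Q).restrictScalars A := by
  obtain ⟨k, y, rfl⟩ := fg_iff_exists_fin_generating_family.mp hQ
  refine ⟨span A (Set.range y), fg_span (Set.finite_range y), fun z hz => ?_⟩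
  obtain ⟨c, rfl⟩ := (mem_span_range_iff_exists_fun B).mp hz
  choose a ha using fun j => hP (Ideal.Quotient.mk P (c j))
  have hsplit : ∑ j, c j • y j =
      ∑ j, a j • y j + ∑ j, (c j - algebraMap A B (a j)) • y j := by
    rw [← Finset.sum_add_distrib]
    refine Finset.sum_congr rfl fun j _ => ?_
    rw [sub_smul, algebraMap_smul]
    abel
  have hmemP (j : Fin k) : c j - algebraMap A B (a j) ∈ P := Ideal.Quotient.eq.mp (ha j).symm
  have h1 : ∑ j, a j • y j ∈ span A (Set.range y) :=
    sum_mem fun j _ => smul_mem _ _ (subset_span ⟨j, rfl⟩)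
  have h2 : ∑ j, (c j - algebraMap A B (a j)) • y j ∈ P • span B (Set.range y) :=
    sum_mem fun j _ => smul_mem_smul (hmemP j) (subset_span ⟨j, rfl⟩)
  rw [hsplit]
  exact add_mem (mem_sup_left h1) (mem_sup_right (restrictScalars_mem A _ _ |>.2 h2))

theorem Submodule.exists_fg_sup_pow_smul_top_eq_top {A B M : Type*} [CommRing A] [CommRing B]
    [Algebra A B] [AddCommGroup M] [Module A M] [Module B M] [IsScalarTower A B M]
    [IsNoetherian B M] {P : Ideal B}
    (hP : Function.Surjective ((Ideal.Quotient.mk P).comp (algebraMap A B))) (n : ℕ) :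
    ∃ N : Submodule A M, N.FG ∧ N ⊔ (P ^ n • ⊤ : Submodule B M).restrictScalars A = ⊤ := by
  induction n with
  | zero => exact ⟨⊥, fg_bot, by simp⟩
  | succ n ih =>
    obtain ⟨N, hN, hNtop⟩ := ih
    obtain ⟨N', hN', hle⟩ :=
      exists_fg_le_sup_smul hP (IsNoetherian.noetherian (P ^ n • (⊤ : Submodule B M)))
    refine ⟨N ⊔ N', hN.sup hN', eq_top_iff.2 ?_⟩
    rw [← hNtop, pow_succ', mul_smul, sup_assoc]
    exact sup_le_sup_left hle N

theorem Module.finite_quotient_smul_top_of_pow_le_map {A B M : Type*} [CommRing A] [CommRing B]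
    [Algebra A B] [AddCommGroup M] [Module A M] [Module B M] [IsScalarTower A B M]
    [IsNoetherian B M] {P : Ideal B}
    (hP : Function.Surjective ((Ideal.Quotient.mk P).comp (algebraMap A B)))
    {I : Ideal A} {n : ℕ} (hpow : P ^ n ≤ I.map (algebraMap A B)) :
    Module.Finite A (M ⧸ I • (⊤ : Submodule A M)) := by
  obtain ⟨N, hN, hNtop⟩ := exists_fg_sup_pow_smul_top_eq_top (M := M) hP n
  have hle : (P ^ n • (⊤ : Submodule B M)).restrictScalars A ≤ I • (⊤ : Submodule A M) := by
    rw [← restrictScalars_top A B M, ← restrictScalars_map_smul_eq]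
    exact restrictScalars_mono A (smul_mono_left hpow)
  have htop : I • ⊤ ⊔ N = ⊤ :=
    eq_top_iff.2 (hNtop.symm.le.trans ((sup_le_sup_left hle N).trans_eq (sup_comm _ _)))
  exact ⟨(map_mkQ_eq_top _ N).2 htop ▸ hN.map _⟩

theorem RingHom.finite_of_maximalIdeal_pow_le_map {A B : Type*} [CommRing A] [CommRing B]
    [IsNoetherianRing B] [IsLocalRing A] [IsLocalRing B] (f : A →+* B) [IsLocalHom f]
    [IsPrecomplete (maximalIdeal A) A] [IsHausdorff (maximalIdeal B) B]
    (hres : Function.Surjective (ResidueField.map f)) {n : ℕ}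
    (hpow : maximalIdeal B ^ n ≤ (maximalIdeal A).map f) : f.Finite := by
  algebraize [f]
  have hres' : Function.Surjective ((residue B).comp (algebraMap A B)) := by
    rw [← ResidueField.map_comp_residue]
    exact hres.comp residue_surjective
  have : Module.Finite A (B ⧸ maximalIdeal A • (⊤ : Submodule A B)) :=
    Module.finite_quotient_smul_top_of_pow_le_map hres' hpow
  have : IsHausdorff (maximalIdeal A) B :=
    .of_map (J := maximalIdeal B) (map_maximalIdeal_le f)
  exact .of_finite_quotient_smul_top (maximalIdeal A)

theorem psi_module_finite_general
    {R S : Type u} [CommRing R] [CommRing S] [IsNoetherianRing S]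
    [IsLocalRing R] [IsLocalRing S]
    (φ : R →+* R) (β : R →+* S) (ψ : S →+* S)
    [IsLocalHom ψ]
    (hart : IsArtinianRing (R ⧸ Ideal.map φ (maximalIdeal R)))
    (hmax : maximalIdeal S = Ideal.map β (maximalIdeal R))
    (hcomm : ψ.comp β = β.comp φ)
    (hres : Function.Bijective (ResidueField.map ψ))
    (hcomplete : IsAdicComplete (maximalIdeal S) S) :
    ψ.Finite := by
  obtain ⟨c, hc⟩ :=
    exists_maximalIdeal_pow_le_of_isArtinianRing_quotient (Ideal.map φ (maximalIdeal R))
  have hpow : maximalIdeal S ^ c ≤ (maximalIdeal S).map ψ :=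
    calc maximalIdeal S ^ c = (maximalIdeal R ^ c).map β := by rw [hmax, Ideal.map_pow]
      _ ≤ ((maximalIdeal R).map φ).map β := Ideal.map_mono hc
      _ = (maximalIdeal S).map ψ := by rw [hmax, Ideal.map_map, Ideal.map_map, hcomm]
  exact ψ.finite_of_maximalIdeal_pow_le_map hres.surjective hpow

/-- Let `φ : (R,m,k) → (R,m,k)` be a contracting endomorphism with
`R/φ(m)R` Artinian, `β̃ : R → (S,mS,K)` a local homomorphism whose target has maximal ideal
`mS`, and `ψ : S → S` a local endomorphism with `ψ ∘ β̃ = β̃ ∘ φ` inducing an isomorphism on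
the residue field `K`, with `S` complete. Then `ψ` is module-finite. -/
theorem psi_module_finite
    {R S : Type u} [CommRing R] [CommRing S] [IsNoetherianRing R] [IsNoetherianRing S]
    [IsLocalRing R] [IsLocalRing S]
    (φ : R →+* R) (β : R →+* S) (ψ : S →+* S)
    [IsLocalHom φ] [IsLocalHom β] [IsLocalHom ψ]
    (hcontr : ∃ N : ℕ, ∀ n : ℕ, N ≤ n → ∀ x ∈ maximalIdeal R,
      (φ ^ n) x ∈ (maximalIdeal R) ^ 2)
    (hart : IsArtinianRing (R ⧸ Ideal.map φ (maximalIdeal R)))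
    (hmax : maximalIdeal S = Ideal.map β (maximalIdeal R))
    (hcomm : ψ.comp β = β.comp φ)
    (hres : Function.Bijective (ResidueField.map ψ))
    (hcomplete : IsAdicComplete (maximalIdeal S) S) :
    ψ.Finite :=
  psi_module_finite_general φ β ψ hart hmax hcomm hres hcomplete
end

section
/- Let φ : (R, m) → (R, m) be a contracting endomorphism of a local ring and C a semidualizing R-complex. If ^nR ∈ B_C(R) for infinitely many n ≥ 1, then C ≃ R (up to shift) in D(R); equivalently pd_R(C) < ∞. -/
/-!
Put `S = ^nR`, an `R`-algebra through the local homomorphism `ψ = φ ^ n`, and let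
`E : C ⊗_R Hom_R(C, S) → S` be the evaluation map, which is bijective since `S ∈ B_C(R)`.
As `E` is `S`-linear for the action of `S` on `Hom_R(C, S)`, choosing `E t₀ = 1` gives
`t = E(t) • t₀` for every `t`. Surjectivity of `E` also gives `f` and `c` with `f c` a unit.
For any `γ : C → k_R` the pairing `P : x ⊗ g ↦ γ(x) · (g c mod 𝔪_S)` is `S`-semilinear, so
`P t = (E t mod 𝔪_S) · P t₀`; evaluating it on `c ⊗ f` and `x ⊗ f` shows that `γ c = 0` forces
`γ = 0`. Hence `c` spans `C / 𝔪C`, so `C = R c` by Nakayama, and `C ≅ R` because `C` is faithful.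
-/

open CategoryTheory

/-- The `i`-th Ext module of two `R`-modules. -/
noncomputable def extModule (R : Type u) [CommRing R] (M N : Type u)
    [AddCommGroup M] [AddCommGroup N] [Module R M] [Module R N] (i : ℕ) : ModuleCat R :=
  ((Ext R (ModuleCat.{u} R) i).obj (Opposite.op (ModuleCat.of R M))).obj (ModuleCat.of R N)

/-- The `i`-th Tor module of two `R`-modules. -/
noncomputable def torModule (R : Type u) [CommRing R] (M N : Type u)
    [AddCommGroup M] [AddCommGroup N] [Module R M] [Module R N] (i : ℕ) : ModuleCat R :=
  ((Tor (ModuleCat.{u} R) i).obj (ModuleCat.of R M)).obj (ModuleCat.of R N)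

/-- An `R`-module `C` is *semidualizing* if it is finitely generated, the homothety map
`R → Hom_R(C, C)` is bijective, and `Ext^i_R(C, C) = 0` for all `i ≥ 1`. -/
def IsSemidualizing (R : Type u) [CommRing R] (C : Type u) [AddCommGroup C] [Module R C] :
    Prop :=
  Module.Finite R C ∧ Function.Bijective (LinearMap.lsmul R C) ∧
    ∀ i : ℕ, 0 < i → Subsingleton (extModule R C C i)

/-- The evaluation map `C ⊗_R Hom_R(C, M) → M`. -/
noncomputable def bassEval (R : Type u) [CommRing R] (C M : Type u)
    [AddCommGroup C] [AddCommGroup M] [Module R C] [Module R M] :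
    TensorProduct R C (C →ₗ[R] M) →ₗ[R] M :=
  TensorProduct.lift ((LinearMap.id : (C →ₗ[R] M) →ₗ[R] (C →ₗ[R] M)).flip)

/-- Membership in the Bass class `B_C(R)`: `Ext^{≥1}_R(C, M) = 0`,
`Tor^R_{≥1}(C, Hom_R(C, M)) = 0`, and the evaluation map `C ⊗_R Hom_R(C,M) → M`
is an isomorphism. -/
def MemBassClass (R : Type u) [CommRing R] (C M : Type u)
    [AddCommGroup C] [AddCommGroup M] [Module R C] [Module R M] : Prop :=
  (∀ i : ℕ, 0 < i → Subsingleton (extModule R C M i)) ∧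
    (∀ i : ℕ, 0 < i → Subsingleton (torModule R C (C →ₗ[R] M) i)) ∧
    Function.Bijective (bassEval R C M)


open IsLocalRing

namespace IsLocalRing

variable {R M : Type*} [CommRing R] [IsLocalRing R] [AddCommGroup M] [Module R M]

theorem span_singleton_eq_top_of_forall_residue_eq_zero [Module.Finite R M] {c : M}
    (h : ∀ γ : M →ₗ[R] ResidueField R, γ c = 0 → γ = 0) : Submodule.span R {c} = ⊤ := by
  rw [← map_mkQ_eq_top, Submodule.map_span, Set.image_singleton,
    ← Submodule.restrictScalars_span R (R ⧸ maximalIdeal R) Ideal.Quotient.mk_surjective,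
    Submodule.restrictScalars_eq_top_iff, Submodule.eq_top_iff']
  let := Ideal.Quotient.field (maximalIdeal R)
  by_contra! ⟨x, hx⟩
  obtain ⟨g, hgx, hgc⟩ := Submodule.exists_le_ker_of_notMem hx
  obtain ⟨x, rfl⟩ := Submodule.mkQ_surjective _ x
  have hγ := h ((g.restrictScalars R).comp (Submodule.mkQ _))
    (hgc (Submodule.mem_span_singleton_self _))
  exact hgx (LinearMap.congr_fun hγ x)

end IsLocalRing

theorem Submodule.nonempty_linearEquiv_of_span_singleton_eq_top {R M : Type*} [CommRing R]
    [AddCommGroup M] [Module R M] {c : M} (hc : Submodule.span R {c} = ⊤)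
    (hfaith : Function.Injective (LinearMap.lsmul R M)) : Nonempty (M ≃ₗ[R] R) := by
  have hsurj : Function.Surjective (LinearMap.toSpanSingleton R M c) := by
    rw [← LinearMap.range_eq_top, ← LinearMap.span_singleton_eq_range, hc]
  refine ⟨(LinearEquiv.ofBijective _ ⟨?_, hsurj⟩).symm⟩
  refine (injective_iff_map_eq_zero _).2 fun r (hr : r • c = 0) => hfaith ?_
  ext x
  obtain ⟨s, rfl⟩ := hsurj x
  show r • s • c = (0 : R) • s • c
  rw [smul_comm, hr, smul_zero, zero_smul]

open TensorProduct

theorem bassEval_tmul {R : Type u} [CommRing R] {C M : Type u} [AddCommGroup C] [AddCommGroup M]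
    [Module R C] [Module R M] (c : C) (f : C →ₗ[R] M) : bassEval R C M (c ⊗ₜ f) = f c :=
  rfl

instance RingHom.isLocalHom_pow {R : Type u} [Semiring R] (φ : R →+* R) [IsLocalHom φ] (n : ℕ) :
    IsLocalHom (φ ^ n) := by
  induction n with
  | zero => rw [pow_zero, RingHom.one_def]; infer_instance
  | succ n ih => rw [pow_succ, RingHom.mul_def]; exact RingHom.isLocalHom_comp _ _

section

variable {R S : Type u} [CommRing R] [CommRing S] [Algebra R S]
  {C : Type u} [AddCommGroup C] [Module R C]

theorem bassEval_comp_lTensor_smul (s : S) :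
    bassEval R C S ∘ₗ (DistribSMul.toLinearMap R (C →ₗ[R] S) s).lTensor C
      = s • bassEval R C S :=
  TensorProduct.ext' fun _ _ => rfl

theorem exists_isUnit_apply_of_surjective_bassEval [IsLocalRing S]
    (h : Function.Surjective (bassEval R C S)) : ∃ (f : C →ₗ[R] S) (c : C), IsUnit (f c) := by
  by_contra! hnon
  have hmem (t : C ⊗[R] (C →ₗ[R] S)) : bassEval R C S t ∈ maximalIdeal S := by
    induction t using TensorProduct.induction_on with
    | zero => simp
    | tmul c f => exact hnon f c
    | add x y hx hy => rw [map_add]; exact add_mem hx hy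
  obtain ⟨t, ht⟩ := h 1
  exact (maximalIdeal.isMaximal S).ne_top ((Ideal.eq_top_iff_one _).2 (ht ▸ hmem t))

variable [IsLocalRing R] [IsLocalRing S] [IsLocalHom (algebraMap R S)]

noncomputable def residuePairing (γ : C →ₗ[R] ResidueField R) (c : C) :
    C ⊗[R] (C →ₗ[R] S) →ₗ[R] ResidueField S :=
  LinearMap.mul' R (ResidueField S) ∘ₗ TensorProduct.map
    ((IsScalarTower.toAlgHom R (ResidueField R) (ResidueField S)).toLinearMap ∘ₗ γ)
    ((IsScalarTower.toAlgHom R S (ResidueField S)).toLinearMap ∘ₗ LinearMap.applyₗ c)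

theorem residuePairing_tmul (γ : C →ₗ[R] ResidueField R) (c x : C) (f : C →ₗ[R] S) :
    residuePairing γ c (x ⊗ₜ f) = algebraMap _ _ (γ x) * residue S (f c) :=
  rfl

theorem residuePairing_comp_lTensor_smul (γ : C →ₗ[R] ResidueField R) (c : C) (s : S) :
    residuePairing γ c ∘ₗ (DistribSMul.toLinearMap R (C →ₗ[R] S) s).lTensor C
      = residue S s • residuePairing γ c := by
  refine TensorProduct.ext' fun x f => ?_
  simp only [LinearMap.coe_comp, Function.comp_apply, LinearMap.lTensor_tmul,
    DistribSMul.toLinearMap_apply, residuePairing_tmul, LinearMap.smul_apply, smul_eq_mul, map_mul]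
  ring

theorem residuePairing_eq_residue_bassEval_mul (h : Function.Bijective (bassEval R C S))
    {t₀ : C ⊗[R] (C →ₗ[R] S)} (ht₀ : bassEval R C S t₀ = 1) (γ : C →ₗ[R] ResidueField R) (c : C)
    (t : C ⊗[R] (C →ₗ[R] S)) :
    residuePairing γ c t = residue S (bassEval R C S t) * residuePairing γ c t₀ := by
  have ht : (DistribSMul.toLinearMap R (C →ₗ[R] S) (bassEval R C S t)).lTensor C t₀ = t := by
    refine h.injective ?_
    rw [← LinearMap.comp_apply, bassEval_comp_lTensor_smul, LinearMap.smul_apply, ht₀,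
      smul_eq_mul, mul_one]
  conv_lhs => rw [← ht, ← LinearMap.comp_apply, residuePairing_comp_lTensor_smul]
  rfl

theorem eq_zero_of_apply_eq_zero_of_bijective_bassEval (h : Function.Bijective (bassEval R C S))
    {f : C →ₗ[R] S} {c : C} (hc : IsUnit (f c)) (γ : C →ₗ[R] ResidueField R) (hγ : γ c = 0) :
    γ = 0 := by
  obtain ⟨t₀, ht₀⟩ := h.2 1
  have hfc : residue S (f c) ≠ 0 := (residue_ne_zero_iff_isUnit _).2 hc
  have key (x : C) : algebraMap _ _ (γ x) * residue S (f c) =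
      residue S (f x) * residuePairing γ c t₀ := by
    rw [← residuePairing_tmul, residuePairing_eq_residue_bassEval_mul h ht₀, bassEval_tmul]
  have ht₀ : residuePairing γ c t₀ = 0 := by
    simpa [hγ, hfc] using (key c).symm
  ext x
  simpa [ht₀, hfc] using key x

theorem nonempty_linearEquiv_of_bijective_bassEval [Module.Finite R C]
    (hfaith : Function.Injective (LinearMap.lsmul R C)) (h : Function.Bijective (bassEval R C S)) :
    Nonempty (C ≃ₗ[R] R) := by
  obtain ⟨f, c, hc⟩ := exists_isUnit_apply_of_surjective_bassEval h.2
  exact Submodule.nonempty_linearEquiv_of_span_singleton_eq_top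
    (IsLocalRing.span_singleton_eq_top_of_forall_residue_eq_zero
      (eq_zero_of_apply_eq_zero_of_bijective_bassEval h hc)) hfaith

end

theorem semidualizing_trivial_of_bassClass_infinitely_many_general
    {R : Type u} [CommRing R] [IsLocalRing R]
    (φ : R →+* R) [IsLocalHom φ]
    (C : Type u) [AddCommGroup C] [Module R C] (hC : IsSemidualizing R C)
    (hbass : {n : ℕ | 1 ≤ n ∧
      (letI : Module R R := Module.compHom R (φ ^ n); MemBassClass R C R)}.Infinite) :
    Nonempty (C ≃ₗ[R] R) := by
  obtain ⟨n, -, hn⟩ := hbass.nonempty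
  -- the `R`-module structure of this algebra is `Module.compHom R (φ ^ n)`, that is `^nR`
  let := (φ ^ n).toAlgebra
  have : IsLocalHom (algebraMap R R) := RingHom.isLocalHom_pow φ n
  have := hC.1
  exact nonempty_linearEquiv_of_bijective_bassEval (S := R) hC.2.1.1 hn.2.2

/-- Let `φ` be a contracting endomorphism of a Noetherian local ring
`(R,m)` and `C` a semidualizing `R`-module.  If `^nR ∈ B_C(R)` for infinitely many `n ≥ 1`,
then `C ≃ R`. -/
theorem semidualizing_trivial_of_bassClass_infinitely_many
    {R : Type u} [CommRing R] [IsNoetherianRing R] [IsLocalRing R]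
    (φ : R →+* R) [IsLocalHom φ]
    (hcontr : ∃ N : ℕ, ∀ n : ℕ, N ≤ n → ∀ x ∈ maximalIdeal R,
      (φ ^ n) x ∈ (maximalIdeal R) ^ 2)
    (C : Type u) [AddCommGroup C] [Module R C] (hC : IsSemidualizing R C)
    (hbass : {n : ℕ | 1 ≤ n ∧
      (letI : Module R R := Module.compHom R (φ ^ n); MemBassClass R C R)}.Infinite) :
    Nonempty (C ≃ₗ[R] R) :=
  semidualizing_trivial_of_bassClass_infinitely_many_general φ C hC hbass
end
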